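/- arXiv:1806.11033 — 4 statements merged into one kernel-verified Lean document; each statement's English description precedes it below -/
import Mathlib

section
/- Let p be a prime, V a vector space over 𝔽_p, σ : V^{⊗p} → V^{⊗p} the linear cyclic-permutation map determined by σ(v₁ ⊗ ⋯ ⊗ v_p) = v_p ⊗ v₁ ⊗ ⋯ ⊗ v_{p−1}, and N = id + σ + σ² + ⋯ + σ^{p−1}. Then the image of N is contained in the kernel of (id − σ), and the function sending v ∈ V to the class of v ⊗ v ⊗ ⋯ ⊗ v (p factors) in ker(id − σ)/im N is an 𝔽_p-linear bijection from V onto ker(id − σ)/im N. -/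
/-!
Choosing a basis `b` of `V`, the tensors `b (f 0) ⊗ ⋯ ⊗ b (f (p - 1))` form a basis of `V^{⊗p}`
that `σ` permutes, so `V^{⊗p}` is a permutation module for a cyclic group of order `p`. For such
a module `ker (1 - σ) / im N` is free on the basis vectors fixed by `σ`: an invariant vector
supported on free orbits is `N` of its restriction to a set of orbit representatives (a free orbit
has exactly `p` points), while on a fixed basis vector `N` is multiplication by `p = 0`. The fixed
basis vectors are the `b j ⊗ ⋯ ⊗ b j`, and the coefficient of `b j ⊗ ⋯ ⊗ b j` in `v ⊗ ⋯ ⊗ v` is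
`c ^ p = c`, where `c` is the `b j`-coordinate of `v`.
-/

open TensorProduct PiTensorProduct Function

theorem Equiv.Perm.minimalPeriod_eq_of_pow_eq_one {X : Type*} {τ : Equiv.Perm X} {p : ℕ}
    (hp : p.Prime) (hτ : τ ^ p = 1) {x : X} (hx : τ x ≠ x) : minimalPeriod τ x = p := by
  have hper : IsPeriodicPt τ p x := by
    rw [IsPeriodicPt, IsFixedPt, ← Equiv.Perm.coe_pow, hτ, Equiv.Perm.one_apply]
  refine (hp.eq_one_or_self_of_dvd _ hper.minimalPeriod_dvd).resolve_left fun h => hx ?_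
  exact minimalPeriod_eq_one_iff_isFixedPt.mp h

theorem Equiv.Perm.SameCycle.exists_pow_eq_of_pow_eq_one {X : Type*} {τ : Equiv.Perm X} {p : ℕ}
    (hp : 0 < p) (hτ : τ ^ p = 1) {x y : X} (h : τ.SameCycle x y) :
    ∃ k < p, (τ ^ k) x = y := by
  obtain ⟨i, rfl⟩ := h
  obtain ⟨n, hn⟩ : ∃ n : ℕ, i % p = n :=
    ⟨_, (Int.toNat_of_nonneg (Int.emod_nonneg i (by omega))).symm⟩
  have hlt : i % p < p := Int.emod_lt_of_pos i (by omega)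
  exact ⟨n, by omega, by rw [zpow_eq_zpow_emod' i hτ, hn, zpow_natCast]⟩

theorem LinearMap.range_sum_pow_le_ker_one_sub {R M : Type*} [Ring R] [AddCommGroup M]
    [Module R M] {σ : Module.End R M} {n : ℕ} (hσ : σ ^ n = 1) :
    range (∑ k ∈ Finset.range n, σ ^ k) ≤ ker (1 - σ) := by
  rintro _ ⟨m, rfl⟩
  rw [mem_ker, ← Module.End.mul_apply, mul_neg_geom_sum, hσ, sub_self, zero_apply]

theorem LinearMap.mem_ker_one_sub_iff {R M : Type*} [Ring R] [AddCommGroup M]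
    [Module R M] {σ : Module.End R M} {m : M} : m ∈ ker (1 - σ) ↔ σ m = m := by
  rw [mem_ker, sub_apply, Module.End.one_apply, sub_eq_zero, eq_comm]

namespace Module.Basis

variable {R M X : Type*} [Ring R] [AddCommGroup M] [Module R M]
  (B : Basis X R M) (τ : Equiv.Perm X) {σ : Module.End R M}

noncomputable def reprFixedPoints : M →ₗ[R] (fixedPoints τ →₀ R) :=
  Finsupp.lsubtypeDomain (fixedPoints τ) ∘ₗ B.repr.toLinearMap

variable {B τ}

theorem reprFixedPoints_apply (m : M) (x : fixedPoints τ) :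
    B.reprFixedPoints τ m x = B.repr m x := rfl

theorem repr_pow_apply (hσ : ∀ m x, B.repr (σ m) x = B.repr m (τ x)) (k : ℕ) (m : M) (x : X) :
    B.repr ((σ ^ k) m) x = B.repr m ((τ ^ k) x) := by
  induction k generalizing m with
  | zero => rfl
  | succ k ih => rw [pow_succ, Module.End.mul_apply, ih, hσ, pow_succ', Equiv.Perm.mul_apply]

theorem repr_sum_pow_apply (hσ : ∀ m x, B.repr (σ m) x = B.repr m (τ x)) (n : ℕ) (m : M)
    (x : X) : B.repr ((∑ k ∈ Finset.range n, σ ^ k) m) x =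
      ∑ k ∈ Finset.range n, B.repr m ((τ ^ k) x) := by
  simp only [LinearMap.sum_apply, map_sum, Finsupp.finsetSum_apply, repr_pow_apply hσ]

theorem pow_eq_one_of_repr_apply {n : ℕ} (hτ : τ ^ n = 1)
    (hσ : ∀ m x, B.repr (σ m) x = B.repr m (τ x)) : σ ^ n = 1 := by
  ext m
  refine B.repr.injective (Finsupp.ext fun x => ?_)
  rw [repr_pow_apply hσ, hτ]
  rfl

theorem reprFixedPoints_sum_pow (p : ℕ) [CharP R p]
    (hσ : ∀ m x, B.repr (σ m) x = B.repr m (τ x)) (m : M) :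
    B.reprFixedPoints τ ((∑ k ∈ Finset.range p, σ ^ k) m) = 0 := by
  ext ⟨x, hx⟩
  have hfix : ∀ k : ℕ, (τ ^ k) x = x := Equiv.Perm.pow_apply_eq_self_of_apply_eq_self hx
  rw [reprFixedPoints_apply, repr_sum_pow_apply hσ]
  simp [hfix]

theorem exists_apply_eq_self_and_reprFixedPoints_eq
    (hσ : ∀ m x, B.repr (σ m) x = B.repr m (τ x)) (f : fixedPoints τ →₀ R) :
    ∃ m, σ m = m ∧ B.reprFixedPoints τ m = f := by
  classical
  refine ⟨B.repr.symm f.extendDomain, B.repr.injective (Finsupp.ext fun x => ?_), ?_⟩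
  · have hτx : τ x ∈ fixedPoints τ ↔ x ∈ fixedPoints τ := by
      simp only [mem_fixedPoints, IsFixedPt, EmbeddingLike.apply_eq_iff_eq]
    rw [hσ, LinearEquiv.apply_symm_apply, Finsupp.extendDomain_apply,
      Finsupp.extendDomain_apply]
    by_cases hx : x ∈ fixedPoints τ
    · simp only [hx, hτx, dite_true]
      exact congrArg f (Subtype.ext hx)
    · simp only [hx, hτx, dite_false]
  · ext x
    simp [reprFixedPoints_apply]

theorem mem_range_sum_pow_of_reprFixedPoints_eq_zero {p : ℕ} (hp : p.Prime) (hτ : τ ^ p = 1)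
    (hσ : ∀ m x, B.repr (σ m) x = B.repr m (τ x)) {m : M} (hm : σ m = m)
    (h0 : B.reprFixedPoints τ m = 0) :
    m ∈ LinearMap.range (∑ k ∈ Finset.range p, σ ^ k) := by
  classical
  have horbit : ∀ k x, B.repr m ((τ ^ k) x) = B.repr m x := fun k x => by
    rw [← repr_pow_apply hσ, Module.End.pow_apply, iterate_fixed hm]
  have hfixed : ∀ x, τ x = x → B.repr m x = 0 := fun x hx => DFunLike.congr_fun h0 ⟨x, hx⟩
  let rep : X → X := fun x => (Quotient.mk (Equiv.Perm.SameCycle.setoid τ) x).out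
  have rep_sameCycle : ∀ x, τ.SameCycle (rep x) x := fun x =>
    Quotient.mk_out (s := Equiv.Perm.SameCycle.setoid τ) x
  have rep_eq : ∀ {x y}, τ.SameCycle x y → rep x = rep y := fun h =>
    congrArg Quotient.out (Quotient.sound h)
  refine ⟨B.repr.symm ((B.repr m).filter fun x => rep x = x),
    B.repr.injective (Finsupp.ext fun x => ?_)⟩
  rw [repr_sum_pow_apply hσ]
  simp only [LinearEquiv.apply_symm_apply, Finsupp.filter_apply]
  by_cases hx : τ x = x
  · simp [Equiv.Perm.pow_apply_eq_self_of_apply_eq_self hx, hfixed x hx]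
  obtain ⟨k₀, hk₀, hrep⟩ := (rep_sameCycle x).symm.exists_pow_eq_of_pow_eq_one hp.pos hτ
  rw [Finset.sum_eq_single_of_mem k₀ (Finset.mem_range.2 hk₀), hrep,
    if_pos (rep_eq (rep_sameCycle x)), ← hrep, horbit]
  intro k hk hne
  rw [if_neg]
  intro hrepk
  have hmin := Equiv.Perm.minimalPeriod_eq_of_pow_eq_one hp hτ hx
  refine hne ((iterate_eq_iterate_iff_of_lt_minimalPeriod (hmin ▸ Finset.mem_range.1 hk)
    (hmin ▸ hk₀)).mp ?_)
  rw [← Equiv.Perm.coe_pow, ← Equiv.Perm.coe_pow, hrep, ← hrepk]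
  exact (rep_eq (Equiv.Perm.sameCycle_pow_right.2 (Equiv.Perm.SameCycle.refl τ x))).symm

variable (B τ) in
/-- `ker (1 - σ) / im N` is the Tate cohomology `Ĥ⁰` of the cyclic group generated by `σ`. -/
noncomputable def tateEquivFixedPoints {p : ℕ} (hp : p.Prime) [CharP R p] (hτ : τ ^ p = 1)
    (hσ : ∀ m x, B.repr (σ m) x = B.repr m (τ x)) :
    (↥(LinearMap.ker (1 - σ)) ⧸ (LinearMap.range (∑ k ∈ Finset.range p, σ ^ k)).comap
      (LinearMap.ker (1 - σ)).subtype) ≃ₗ[R] (fixedPoints τ →₀ R) :=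
  LinearEquiv.ofBijective
    (Submodule.liftQ _ (B.reprFixedPoints τ ∘ₗ (LinearMap.ker (1 - σ)).subtype) <| by
      rintro _ ⟨y, hy⟩
      simp only [LinearMap.mem_ker, LinearMap.comp_apply, ← hy,
        reprFixedPoints_sum_pow p hσ])
    ⟨LinearMap.ker_eq_bot.mp <| Submodule.ker_liftQ_eq_bot _ _ _ fun m h0 =>
        mem_range_sum_pow_of_reprFixedPoints_eq_zero hp hτ hσ
          (LinearMap.mem_ker_one_sub_iff.1 m.2) h0,
      fun f => by
        obtain ⟨m, hm, rfl⟩ := exists_apply_eq_self_and_reprFixedPoints_eq hσ f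
        exact ⟨Submodule.Quotient.mk ⟨m, LinearMap.mem_ker_one_sub_iff.2 hm⟩, rfl⟩⟩

theorem tateEquivFixedPoints_mk {p : ℕ} (hp : p.Prime) [CharP R p] (hτ : τ ^ p = 1)
    (hσ : ∀ m x, B.repr (σ m) x = B.repr m (τ x)) (m : LinearMap.ker (1 - σ)) :
    tateEquivFixedPoints B τ hp hτ hσ (Submodule.Quotient.mk m) = B.reprFixedPoints τ m :=
  rfl

end Module.Basis

section RotateArgs

variable (p : ℕ) [NeZero p] (α : Type*)

def rotateArgs : Equiv.Perm (Fin p → α) where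
  toFun f i := f (i + 1)
  invFun f i := f (i - 1)
  left_inv f := by simp
  right_inv f := by simp

variable {p α}

@[simp]
theorem rotateArgs_apply (f : Fin p → α) (i : Fin p) : rotateArgs p α f i = f (i + 1) := rfl

open Fin.NatCast in
theorem rotateArgs_pow_apply (k : ℕ) (f : Fin p → α) (i : Fin p) :
    (rotateArgs p α ^ k) f i = f (i + k) := by
  induction k generalizing i with
  | zero => simp
  | succ k ih =>
    rw [pow_succ', Equiv.Perm.mul_apply, rotateArgs_apply, ih, Nat.cast_succ,
      add_comm (k : Fin p), add_assoc]

theorem rotateArgs_pow_self : rotateArgs p α ^ p = 1 := by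
  ext f i
  rw [rotateArgs_pow_apply, Fin.natCast_self, add_zero, Equiv.Perm.one_apply]

variable (p α)

open Fin.NatCast in
def fixedPointsRotateArgsEquiv : fixedPoints (rotateArgs p α) ≃ α where
  toFun f := f.1 0
  invFun a := ⟨fun _ => a, rfl⟩
  left_inv f := Subtype.ext <| funext fun i => by
    have h := congrFun (Equiv.Perm.pow_apply_eq_self_of_apply_eq_self f.2 i.val) 0
    rw [rotateArgs_pow_apply, zero_add, Fin.cast_val_eq_self] at h
    exact h.symm
  right_inv _ := rfl

end RotateArgs

theorem Basis.piTensorProduct_repr_apply_rotateArgs {R V I : Type*} [CommSemiring R]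
    [AddCommMonoid V] [Module R V] (b : Module.Basis I R V) {p : ℕ} [NeZero p]
    {σ : Module.End R (⨂[R] (_ : Fin p), V)}
    (hσ : ∀ v : Fin p → V, σ (tprod R v) = tprod R fun i => v (i - 1))
    (m : ⨂[R] (_ : Fin p), V) (f : Fin p → I) :
    (Basis.piTensorProduct fun _ => b).repr (σ m) f =
      (Basis.piTensorProduct fun _ => b).repr m (rotateArgs p I f) := by
  induction m using PiTensorProduct.induction_on with
  | smul_tprod r v =>
    simp only [map_smul, hσ, Finsupp.smul_apply, piTensorProduct_repr_tprod_apply]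
    congr 1
    exact (Fintype.prod_equiv (Equiv.addRight 1) _ _ fun i => by simp).symm
  | add x y hx hy => simp only [map_add, Finsupp.add_apply, hx, hy]

theorem Basis.piTensorProduct_repr_tprod_const {V I : Type*} {p : ℕ} [Fact p.Prime]
    [AddCommGroup V] [Module (ZMod p) V] (b : Module.Basis I (ZMod p) V) (v : V) (j : I) :
    (Basis.piTensorProduct fun _ : Fin p => b).repr (tprod (ZMod p) fun _ => v) (fun _ => j) =
      b.repr v j := by
  rw [piTensorProduct_repr_tprod_apply, Finset.prod_const, Finset.card_univ, Fintype.card_fin,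
    ZMod.pow_card]

/-- For a prime `p`, a vector space `V` over `𝔽_p`, the cyclic
permutation `σ` of the `p`-fold tensor power `V^{⊗p}` and the norm
`N = id + σ + ⋯ + σ^{p-1}`, the image of `N` is contained in the kernel of `id - σ`,
every `v ⊗ ⋯ ⊗ v` lies in this kernel, and `v ↦ [v ⊗ ⋯ ⊗ v]` defines an `𝔽_p`-linear
bijection of `V` with `ker(id - σ)/im N`. -/
theorem stmt1 (p : ℕ) (hp : p.Prime) [NeZero p] (V : Type*) [AddCommGroup V]
    [Module (ZMod p) V]
    (σ : Module.End (ZMod p) (⨂[ZMod p] (_ : Fin p), V))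
    (hσ : ∀ v : Fin p → V,
      σ (tprod (ZMod p) v) = tprod (ZMod p) (fun i => v (i - 1))) :
    LinearMap.range (∑ k ∈ Finset.range p, σ ^ k) ≤ LinearMap.ker (1 - σ) ∧
    (∀ v : V, tprod (ZMod p) (fun _ : Fin p => v) ∈ LinearMap.ker (1 - σ)) ∧
    ∃ g : V →ₗ[ZMod p]
        (↥(LinearMap.ker (1 - σ)) ⧸
          (LinearMap.range (∑ k ∈ Finset.range p, σ ^ k)).comap
            (LinearMap.ker (1 - σ)).subtype),
      (∀ (v : V) (h : tprod (ZMod p) (fun _ : Fin p => v) ∈ LinearMap.ker (1 - σ)),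
        g v = Submodule.Quotient.mk ⟨tprod (ZMod p) (fun _ : Fin p => v), h⟩) ∧
      Function.Bijective g := by
  have : Fact p.Prime := ⟨hp⟩
  let b := Module.Basis.ofVectorSpace (ZMod p) V
  let B := Basis.piTensorProduct fun _ : Fin p => b
  have hσB := Basis.piTensorProduct_repr_apply_rotateArgs b hσ
  refine ⟨LinearMap.range_sum_pow_le_ker_one_sub
      (B.pow_eq_one_of_repr_apply rotateArgs_pow_self hσB),
    fun v => LinearMap.mem_ker_one_sub_iff.2 (hσ _), ?_⟩
  let e := B.tateEquivFixedPoints _ hp rotateArgs_pow_self hσB ≪≫ₗ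
    Finsupp.domLCongr (fixedPointsRotateArgsEquiv p _) ≪≫ₗ b.repr.symm
  refine ⟨e.symm.toLinearMap, fun v hv => e.symm_apply_eq.2 ?_, e.symm.bijective⟩
  refine b.repr.injective (Finsupp.ext fun j => ?_)
  rw [LinearEquiv.trans_apply, LinearEquiv.trans_apply, LinearEquiv.apply_symm_apply,
    Finsupp.domLCongr_apply, Finsupp.domCongr_apply, Finsupp.equivMapDomain_apply,
    Module.Basis.tateEquivFixedPoints_mk, Module.Basis.reprFixedPoints_apply]
  exact (Basis.piTensorProduct_repr_tprod_const b v j).symm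
end

section
/- Let k be a commutative ring and A an ℕ-graded (commutative and cocommutative) Hopf algebra over k. Then A(0) and the connected component A′ = {x ∈ A : (id ⊗ p)(Δ x) = x ⊗ 1} are k-submodules of A closed under multiplication, comultiplication and antipode (so each is a Hopf subalgebra), and the multiplication map A(0) ⊗_k A′ → A, a ⊗ x ↦ a·x, is an isomorphism of Hopf algebras, where A(0) ⊗_k A′ carries the tensor-product Hopf algebra structure. -/
/-!
For a commutative cocommutative Hopf algebra `A`, the algebra endomorphisms of `A` form a
commutative group under convolution, with inverse `f⁻¹ = f ∘ S`, and convolution of bialgebra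
endomorphisms is again one. The degree-zero projection `p` is an idempotent bialgebra
endomorphism; put `P = p⁻¹ * id`. Then `p * P = id`, `p ∘ P = P ∘ p = ε(·) 1` and `P` is
idempotent, and the connected component `A′` is exactly the set of fixed points of `P`, just as
`A(0)` is that of `p`. Fixed points of an idempotent bialgebra endomorphism form a Hopf
subalgebra. Finally `Ψ = (p ⊗ P) ∘ Δ` inverts multiplication `A(0) ⊗ A′ → A`: on one side
`μ ∘ Ψ = p * P = id`, on the other `Ψ (a x) = Ψ a * Ψ x = (a ⊗ 1) (1 ⊗ x)`.
-/

open TensorProduct Coalgebra Bialgebra HopfAlgebra WithConv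

section Antipode

variable {k A B C : Type*} [CommSemiring k] [CommSemiring A] [HopfAlgebra k A]

theorem AlgHom.ofConv_convInv [CommSemiring B] [Bialgebra k B] (f : A →ₐ[k] B) :
    (toConv f)⁻¹.ofConv = f.comp (antipodeAlgHom k A) := rfl

theorem AlgHom.convInv_comp_bialgHom [CommSemiring B] [Bialgebra k B] [CommSemiring C]
    [HopfAlgebra k C] (f : WithConv (A →ₐ[k] B)) (q : C →ₐc[k] A) :
    toConv (f⁻¹.ofConv.comp (q : C →ₐ[k] A)) = (toConv (f.ofConv.comp (q : C →ₐ[k] A)))⁻¹ :=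
  map_inv (MonoidHom.mk' (fun f : WithConv (A →ₐ[k] B) => toConv (f.ofConv.comp (q : C →ₐ[k] A)))
    fun f g => by rw [AlgHom.convMul_comp_bialgHom_distrib]) f

theorem HopfAlgebra.antipodeAlgHom_comp_bialgHom [CommSemiring C] [HopfAlgebra k C]
    (q : C →ₐc[k] A) :
    (antipodeAlgHom k A).comp (q : C →ₐ[k] A) = (q : C →ₐ[k] A).comp (antipodeAlgHom k C) :=
  congrArg ofConv (AlgHom.convInv_comp_bialgHom (toConv (AlgHom.id k A)) q)

theorem AlgHom.includeLeft_convMul_includeRight [CommSemiring B] [Algebra k B] [CommSemiring C]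
    [Algebra k C] (f : A →ₐ[k] B) (g : A →ₐ[k] C) :
    toConv (Algebra.TensorProduct.includeLeft.comp f) *
        toConv (Algebra.TensorProduct.includeRight.comp g) =
      toConv ((Algebra.TensorProduct.map f g).comp (comulAlgHom k A)) := by
  rw [AlgHom.convMul_def, ← AlgHom.comp_assoc]
  congr 2
  ext <;> simp

variable [IsCocomm k A]

theorem HopfAlgebra.map_antipodeAlgHom_comp_comulAlgHom :
    (Algebra.TensorProduct.map (antipodeAlgHom k A) (antipodeAlgHom k A)).comp
        (comulAlgHom k A) =
      (comulAlgHom k A).comp (antipodeAlgHom k A) := by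
  have h := AlgHom.includeLeft_convMul_includeRight (AlgHom.id k A) (AlgHom.id k A)
  rw [AlgHom.comp_id, AlgHom.comp_id, Algebra.TensorProduct.map_id, AlgHom.id_comp] at h
  apply toConv_injective
  rw [← AlgHom.includeLeft_convMul_includeRight]
  change _ = (toConv (comulAlgHom k A))⁻¹
  rw [← h]
  exact (mul_inv (α := WithConv (A →ₐ[k] A ⊗[k] A)) _ _).symm

variable (k A) in
noncomputable def HopfAlgebra.antipodeBialgHom : A →ₐc[k] A :=
  .ofAlgHom (antipodeAlgHom k A) (by ext; simp) map_antipodeAlgHom_comp_comulAlgHom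

end Antipode

section FixedSubmodule

variable {k A : Type*} [CommSemiring k] [CommSemiring A] [Bialgebra k A] (q : A →ₐc[k] A)

def fixedSubmodule : Submodule k A := LinearMap.eqLocus (q : A →ₗ[k] A) LinearMap.id

variable {q}

theorem mem_fixedSubmodule {x : A} : x ∈ fixedSubmodule q ↔ q x = x := Iff.rfl

def toFixedSubmodule (hq : IsIdempotentElem q) : A →ₗ[k] fixedSubmodule q :=
  (q : A →ₗ[k] A).codRestrict _ fun x => congr($hq x)

theorem subtype_comp_toFixedSubmodule (hq : IsIdempotentElem q) :
    (fixedSubmodule q).subtype ∘ₗ toFixedSubmodule hq = q := rfl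

theorem toFixedSubmodule_comp_subtype (hq : IsIdempotentElem q) :
    toFixedSubmodule hq ∘ₗ (fixedSubmodule q).subtype = LinearMap.id := by
  ext x
  exact x.2

theorem one_mem_fixedSubmodule : (1 : A) ∈ fixedSubmodule q := map_one q

theorem mul_mem_fixedSubmodule {x y : A} (hx : x ∈ fixedSubmodule q)
    (hy : y ∈ fixedSubmodule q) : x * y ∈ fixedSubmodule q := by
  rw [mem_fixedSubmodule] at *
  rw [map_mul, hx, hy]

theorem comul_mem_range_map_subtype_fixedSubmodule (hq : IsIdempotentElem q) {x : A}
    (hx : x ∈ fixedSubmodule q) :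
    comul x ∈ LinearMap.range (map (fixedSubmodule q).subtype (fixedSubmodule q).subtype) := by
  refine ⟨map (toFixedSubmodule hq) (toFixedSubmodule hq) (comul x), ?_⟩
  rw [map_map, subtype_comp_toFixedSubmodule, CoalgHomClass.map_comp_comul_apply,
    mem_fixedSubmodule.1 hx]

end FixedSubmodule

theorem antipode_mem_fixedSubmodule {k A : Type*} [CommSemiring k] [CommSemiring A]
    [HopfAlgebra k A] {q : A →ₐc[k] A} {x : A} (hx : x ∈ fixedSubmodule q) :
    antipode k x ∈ fixedSubmodule q := by
  rw [mem_fixedSubmodule] at hx ⊢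
  conv_rhs => rw [← hx]
  exact (congr($(antipodeAlgHom_comp_bialgHom q) x)).symm

theorem Coalgebra.map_comp_counit_comul_right {R C M N : Type*} [CommSemiring R]
    [AddCommMonoid C] [Module R C] [Coalgebra R C] [AddCommMonoid M] [Module R M]
    [AddCommMonoid N] [Module R N] (f : C →ₗ[R] M) (g : R →ₗ[R] N) (x : C) :
    map f (g ∘ₗ counit) (comul x) = f x ⊗ₜ g 1 := by
  rw [← LinearMap.map_lTensor, lTensor_counit_comul, map_tmul]

theorem Coalgebra.map_comp_counit_comul_left {R C M N : Type*} [CommSemiring R]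
    [AddCommMonoid C] [Module R C] [Coalgebra R C] [AddCommMonoid M] [Module R M]
    [AddCommMonoid N] [Module R N] (f : R →ₗ[R] M) (g : C →ₗ[R] N) (x : C) :
    map (f ∘ₗ counit) g (comul x) = f 1 ⊗ₜ g x := by
  rw [← LinearMap.map_rTensor, rTensor_counit_comul, map_tmul]

section ComplProj

variable {k A : Type*} [CommSemiring k] [CommSemiring A] [HopfAlgebra k A] [IsCocomm k A]
  (p : A →ₐc[k] A)

/-- In the convolution group of algebra endomorphisms this is `p⁻¹ * id`. -/
noncomputable def complProj : A →ₐc[k] A :=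
  ofConv (toConv (p.comp (antipodeBialgHom k A)) * toConv (BialgHom.id k A))

theorem coe_complProj :
    (complProj p : A →ₐ[k] A) = ofConv ((toConv (p : A →ₐ[k] A))⁻¹ * toConv (AlgHom.id k A)) :=
  congrArg ofConv (BialgHom.toAlgHom_convMul _ _)

theorem convMul_complProj :
    toConv (p : A →ₐ[k] A) * toConv (complProj p : A →ₐ[k] A) = toConv (AlgHom.id k A) := by
  rw [coe_complProj, toConv_ofConv, mul_inv_cancel_left]

variable {p}

theorem comp_complProj (hp : IsIdempotentElem p) :
    (p : A →ₐ[k] A).comp (complProj p : A →ₐ[k] A) = ofConv (1 : WithConv (A →ₐ[k] A)) := by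
  have hp' : (p : A →ₐ[k] A).comp (p : A →ₐ[k] A) = p := congrArg BialgHom.toAlgHom hp
  rw [coe_complProj, AlgHom.comp_convMul_distrib, ofConv_toConv, AlgHom.comp_id,
    AlgHom.ofConv_convInv, ← AlgHom.comp_assoc, hp', ← AlgHom.ofConv_convInv, toConv_ofConv,
    inv_mul_cancel]

theorem complProj_comp (hp : IsIdempotentElem p) :
    (complProj p : A →ₐ[k] A).comp (p : A →ₐ[k] A) = ofConv (1 : WithConv (A →ₐ[k] A)) := by
  have hp' : (p : A →ₐ[k] A).comp (p : A →ₐ[k] A) = p := congrArg BialgHom.toAlgHom hp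
  rw [coe_complProj, AlgHom.convMul_comp_bialgHom_distrib, AlgHom.convInv_comp_bialgHom,
    ofConv_toConv, AlgHom.id_comp, hp', inv_mul_cancel]

theorem isIdempotentElem_complProj (hp : IsIdempotentElem p) :
    IsIdempotentElem (complProj p) := by
  apply BialgHom.coe_toAlgHom_injective
  change (complProj p : A →ₐ[k] A).comp (complProj p : A →ₐ[k] A) = complProj p
  nth_rw 1 [coe_complProj]
  rw [AlgHom.convMul_comp_bialgHom_distrib, AlgHom.convInv_comp_bialgHom, ofConv_toConv,
    AlgHom.id_comp, comp_complProj hp, toConv_ofConv, inv_one, one_mul, ofConv_toConv]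

theorem mem_fixedSubmodule_complProj_iff (hp : IsIdempotentElem p) {x : A} :
    x ∈ fixedSubmodule (complProj p) ↔
      LinearMap.lTensor A (p : A →ₗ[k] A) (comul x) = x ⊗ₜ 1 := by
  rw [mem_fixedSubmodule]
  constructor
  · intro hx
    have hpP : (p : A →ₗ[k] A) ∘ₗ (complProj p : A →ₗ[k] A) =
        Algebra.linearMap k A ∘ₗ counit :=
      congrArg AlgHom.toLinearMap (comp_complProj hp)
    conv_lhs => rw [← hx]
    rw [← CoalgHomClass.map_comp_comul_apply, LinearMap.lTensor_map, hpP,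
      Coalgebra.map_comp_counit_comul_right]
    simp [hx]
  · intro hx
    have hswap : LinearMap.rTensor A (p : A →ₗ[k] A) (comul x) = 1 ⊗ₜ x := by
      rw [← comm_comul k x, LinearMap.rTensor_comm, hx]
      rfl
    have hSp : (p : A →ₗ[k] A) ∘ₗ antipode k = antipode k ∘ₗ (p : A →ₗ[k] A) :=
      congrArg AlgHom.toLinearMap (antipodeAlgHom_comp_bialgHom p).symm
    calc complProj p x
        = LinearMap.mul' k A (map ((p : A →ₗ[k] A) ∘ₗ antipode k) LinearMap.id (comul x)) := rfl
      _ = LinearMap.mul' k A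
            (map (antipode k) LinearMap.id (LinearMap.rTensor A (p : A →ₗ[k] A) (comul x))) := by
          rw [LinearMap.map_rTensor, hSp]
      _ = x := by rw [hswap]; simp

theorem map_complProj_comul_of_mem_left (hp : IsIdempotentElem p) {a : A}
    (ha : a ∈ fixedSubmodule p) :
    map (p : A →ₗ[k] A) (complProj p : A →ₗ[k] A) (comul a) = a ⊗ₜ 1 := by
  have hpp : (p : A →ₗ[k] A) ∘ₗ (p : A →ₗ[k] A) = p :=
    congrArg (fun q : A →ₐc[k] A => (q : A →ₗ[k] A)) hp
  have hPp : (complProj p : A →ₗ[k] A) ∘ₗ (p : A →ₗ[k] A) = Algebra.linearMap k A ∘ₗ counit :=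
    congrArg AlgHom.toLinearMap (complProj_comp hp)
  rw [mem_fixedSubmodule] at ha
  conv_lhs => rw [← ha, ← CoalgHomClass.map_comp_comul_apply, map_map, hpp, hPp,
    Coalgebra.map_comp_counit_comul_right]
  simp [ha]

theorem map_complProj_comul_of_mem_right (hp : IsIdempotentElem p) {x : A}
    (hx : x ∈ fixedSubmodule (complProj p)) :
    map (p : A →ₗ[k] A) (complProj p : A →ₗ[k] A) (comul x) = 1 ⊗ₜ x := by
  have hPP : (complProj p : A →ₗ[k] A) ∘ₗ (complProj p : A →ₗ[k] A) = complProj p :=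
    congrArg (fun q : A →ₐc[k] A => (q : A →ₗ[k] A)) (isIdempotentElem_complProj hp)
  have hpP : (p : A →ₗ[k] A) ∘ₗ (complProj p : A →ₗ[k] A) = Algebra.linearMap k A ∘ₗ counit :=
    congrArg AlgHom.toLinearMap (comp_complProj hp)
  rw [mem_fixedSubmodule] at hx
  conv_lhs => rw [← hx, ← CoalgHomClass.map_comp_comul_apply, map_map, hPP, hpP,
    Coalgebra.map_comp_counit_comul_left]
  simp [hx]

theorem map_complProj_comul_mul (hp : IsIdempotentElem p) {a x : A}
    (ha : a ∈ fixedSubmodule p) (hx : x ∈ fixedSubmodule (complProj p)) :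
    map (p : A →ₗ[k] A) (complProj p : A →ₗ[k] A) (comul (a * x)) = a ⊗ₜ x := by
  calc map (p : A →ₗ[k] A) (complProj p : A →ₗ[k] A) (comul (a * x))
      = Algebra.TensorProduct.map (p : A →ₐ[k] A) (complProj p : A →ₐ[k] A)
          (comul a * comul x) := by rw [comul_mul]; rfl
    _ = (a ⊗ₜ 1) * (1 ⊗ₜ x) := by
      rw [map_mul]
      exact congr($(map_complProj_comul_of_mem_left hp ha) *
        $(map_complProj_comul_of_mem_right hp hx))
    _ = a ⊗ₜ x := by rw [Algebra.TensorProduct.tmul_mul_tmul, mul_one, one_mul]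

theorem bijective_mul'_comp_map_subtype_fixedSubmodule (hp : IsIdempotentElem p) :
    Function.Bijective (LinearMap.mul' k A ∘ₗ
      map (fixedSubmodule p).subtype (fixedSubmodule (complProj p)).subtype) := by
  have hP := isIdempotentElem_complProj hp
  set j := map (fixedSubmodule p).subtype (fixedSubmodule (complProj p)).subtype
  set r := map (toFixedSubmodule hp) (toFixedSubmodule hP)
  -- Tensoring injections need not give an injection over a ring; here `r` is a left inverse.
  have hj : Function.Injective j := by
    refine Function.LeftInverse.injective (g := r) fun w => ?_
    rw [map_map, toFixedSubmodule_comp_subtype, toFixedSubmodule_comp_subtype, map_id,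
      LinearMap.id_apply]
  have hΨ : ∀ w, map (p : A →ₗ[k] A) (complProj p : A →ₗ[k] A)
      (comul (LinearMap.mul' k A (j w))) = j w := by
    intro w
    induction w with
    | zero => simp
    | add u v hu hv => simp only [map_add, hu, hv]
    | tmul a x => exact map_complProj_comul_mul hp a.2 x.2
  constructor
  · exact Function.Injective.of_comp
      (f := map (p : A →ₗ[k] A) (complProj p : A →ₗ[k] A) ∘ₗ comul)
      fun u v h => hj (by simpa [hΨ] using h)
  · intro z
    refine ⟨r (comul z), ?_⟩
    rw [LinearMap.comp_apply, map_map, subtype_comp_toFixedSubmodule,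
      subtype_comp_toFixedSubmodule]
    exact congr($(convMul_complProj p) z)

end ComplProj

section Graded

open GradedAlgebra

section Algebra

variable {k A : Type*} [CommSemiring k] [CommSemiring A] [Algebra k A]
  (𝒜 : ℕ → Submodule k A) [GradedAlgebra 𝒜]

def GradedAlgebra.projZeroAlgHom : A →ₐ[k] A where
  __ := GradedRing.projZeroRingHom 𝒜
  commutes' r := DirectSum.decompose_of_mem_same 𝒜 (SetLike.algebraMap_mem_graded 𝒜 r)

theorem GradedAlgebra.projZeroAlgHom_comp_subtype (i : ℕ) :
    (projZeroAlgHom 𝒜).toLinearMap ∘ₗ (𝒜 i).subtype = if i = 0 then (𝒜 i).subtype else 0 := by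
  ext ⟨x, hx⟩
  split_ifs with h
  · subst h
    exact DirectSum.decompose_of_mem_same 𝒜 hx
  · exact DirectSum.decompose_of_mem_ne 𝒜 hx h

theorem GradedAlgebra.map_projZeroAlgHom_comp_map_subtype (i j : ℕ) :
    map (projZeroAlgHom 𝒜).toLinearMap (projZeroAlgHom 𝒜).toLinearMap ∘ₗ
        map (𝒜 i).subtype (𝒜 j).subtype =
      if i + j = 0 then map (𝒜 i).subtype (𝒜 j).subtype else 0 := by
  rw [← map_comp, projZeroAlgHom_comp_subtype, projZeroAlgHom_comp_subtype]
  by_cases hi : i = 0 <;> by_cases hj : j = 0 <;> simp [hi, hj]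

end Algebra

variable {k A : Type*} [CommSemiring k] [CommSemiring A] [Bialgebra k A]
  (𝒜 : ℕ → Submodule k A)

structure IsGradedCoalgebra : Prop where
  comul_mem : ∀ n : ℕ, ∀ x ∈ 𝒜 n, comul (R := k) x ∈
    ⨆ (ij : ℕ × ℕ) (_ : ij.1 + ij.2 = n),
      LinearMap.range (TensorProduct.map (𝒜 ij.1).subtype (𝒜 ij.2).subtype)
  counit_eq_zero : ∀ n : ℕ, 0 < n → ∀ x ∈ 𝒜 n, counit (R := k) x = 0

variable [GradedAlgebra 𝒜] {𝒜}

theorem GradedAlgebra.map_projZeroAlgHom_comul (h𝒜 : IsGradedCoalgebra 𝒜) (x : A) :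
    map (projZeroAlgHom 𝒜).toLinearMap (projZeroAlgHom 𝒜).toLinearMap (comul x) =
      comul (projZeroAlgHom 𝒜 x) := by
  induction x using DirectSum.Decomposition.inductionOn 𝒜 with
  | zero => simp
  | add x y hx hy => simp only [map_add, hx, hy]
  | @homogeneous n x =>
    have hle : (⨆ (ij : ℕ × ℕ) (_ : ij.1 + ij.2 = n),
        LinearMap.range (TensorProduct.map (𝒜 ij.1).subtype (𝒜 ij.2).subtype)) ≤
        LinearMap.eqLocus (map (projZeroAlgHom 𝒜).toLinearMap (projZeroAlgHom 𝒜).toLinearMap)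
          (if n = 0 then LinearMap.id else 0) := by
      refine iSup₂_le fun ij hij => ?_
      rintro _ ⟨t, rfl⟩
      rw [LinearMap.mem_eqLocus, ← LinearMap.comp_apply, map_projZeroAlgHom_comp_map_subtype, hij]
      split_ifs <;> rfl
    have hmem := LinearMap.mem_eqLocus.1 (hle (h𝒜.comul_mem n x x.2))
    have hx := congr($(projZeroAlgHom_comp_subtype 𝒜 n) x)
    split_ifs at hmem hx <;> simp_all

theorem GradedAlgebra.counit_projZeroAlgHom (h𝒜 : IsGradedCoalgebra 𝒜) (x : A) :
    counit (R := k) (projZeroAlgHom 𝒜 x) = counit x := by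
  induction x using DirectSum.Decomposition.inductionOn 𝒜 with
  | zero => simp
  | add x y hx hy => simp only [map_add, hx, hy]
  | @homogeneous n x =>
    have hx := congr($(projZeroAlgHom_comp_subtype 𝒜 n) x)
    split_ifs at hx with hn
    · simp_all
    · simp_all [h𝒜.counit_eq_zero n (Nat.pos_of_ne_zero hn) x x.2]

def GradedAlgebra.projZeroBialgHom (h𝒜 : IsGradedCoalgebra 𝒜) : A →ₐc[k] A :=
  .ofAlgHom (projZeroAlgHom 𝒜) (AlgHom.ext fun x => by simpa using counit_projZeroAlgHom h𝒜 x)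
    (AlgHom.ext (map_projZeroAlgHom_comul h𝒜))

theorem GradedAlgebra.isIdempotentElem_projZeroBialgHom (h𝒜 : IsGradedCoalgebra 𝒜) :
    IsIdempotentElem (projZeroBialgHom h𝒜) :=
  BialgHom.ext fun _ => DirectSum.decompose_of_mem_same 𝒜 (SetLike.coe_mem _)

theorem GradedAlgebra.fixedSubmodule_projZeroBialgHom (h𝒜 : IsGradedCoalgebra 𝒜) :
    fixedSubmodule (projZeroBialgHom h𝒜) = 𝒜 0 := by
  ext x
  exact ⟨fun h => mem_fixedSubmodule.1 h ▸ SetLike.coe_mem _,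
    DirectSum.decompose_of_mem_same 𝒜⟩

end Graded

theorem stmt2_general (k A : Type*) [CommRing k] [CommRing A] [HopfAlgebra k A]
    (hcocomm : ∀ x : A,
      TensorProduct.comm k A A (Coalgebra.comul (R := k) x) = Coalgebra.comul (R := k) x)
    (𝒜 : ℕ → Submodule k A) [DirectSum.Decomposition 𝒜]
    (hcomul : ∀ n : ℕ, ∀ x ∈ 𝒜 n, Coalgebra.comul (R := k) x ∈
      ⨆ (ij : ℕ × ℕ) (_ : ij.1 + ij.2 = n),
        LinearMap.range (TensorProduct.map (𝒜 ij.1).subtype (𝒜 ij.2).subtype))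
    (hcounit : ∀ n : ℕ, 0 < n → ∀ x ∈ 𝒜 n, Coalgebra.counit (R := k) x = 0)
    (hone : (1 : A) ∈ 𝒜 0)
    (hgrmul : ∀ i j : ℕ, ∀ x ∈ 𝒜 i, ∀ y ∈ 𝒜 j, x * y ∈ 𝒜 (i + j)) :
    -- `pr` is the projection of `A` onto the degree-zero component `A(0)`
    let pr : A →ₗ[k] A := (𝒜 0).subtype ∘ₗ
      (DirectSum.component k ℕ (fun i => ↥(𝒜 i)) 0) ∘ₗ
      (DirectSum.decomposeLinearEquiv 𝒜).toLinearMap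
    ∃ A' : Submodule k A,
      -- `A'` is the connected component of the unit
      (∀ x : A, x ∈ A' ↔
        LinearMap.lTensor A pr (Coalgebra.comul (R := k) x) = x ⊗ₜ[k] (1 : A)) ∧
      -- `A(0)` is a Hopf subalgebra
      (1 : A) ∈ 𝒜 0 ∧
      (∀ x ∈ 𝒜 0, ∀ y ∈ 𝒜 0, x * y ∈ 𝒜 0) ∧
      (∀ x ∈ 𝒜 0, Coalgebra.comul (R := k) x ∈
        LinearMap.range (TensorProduct.map (𝒜 0).subtype (𝒜 0).subtype)) ∧
      (∀ x ∈ 𝒜 0, HopfAlgebra.antipode (R := k) x ∈ 𝒜 0) ∧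
      -- `A'` is a Hopf subalgebra
      (1 : A) ∈ A' ∧
      (∀ x ∈ A', ∀ y ∈ A', x * y ∈ A') ∧
      (∀ x ∈ A', Coalgebra.comul (R := k) x ∈
        LinearMap.range (TensorProduct.map A'.subtype A'.subtype)) ∧
      (∀ x ∈ A', HopfAlgebra.antipode (R := k) x ∈ A') ∧
      -- the multiplication map `A(0) ⊗ A' → A` is an isomorphism
      Function.Bijective
        (LinearMap.mul' k A ∘ₗ TensorProduct.map (𝒜 0).subtype A'.subtype) := by
  intro pr
  have : IsCocomm k A := ⟨LinearMap.ext hcocomm⟩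
  let : GradedAlgebra 𝒜 :=
    { one_mem := hone, mul_mem := fun i j _ _ hx hy => hgrmul i j _ hx _ hy }
  have h𝒜 : IsGradedCoalgebra 𝒜 := ⟨hcomul, hcounit⟩
  have hp := GradedAlgebra.isIdempotentElem_projZeroBialgHom h𝒜
  have hP := isIdempotentElem_complProj hp
  rw [← GradedAlgebra.fixedSubmodule_projZeroBialgHom h𝒜]
  -- `pr` is definitionally the linear map underlying `projZeroBialgHom h𝒜`.
  exact ⟨fixedSubmodule (complProj (GradedAlgebra.projZeroBialgHom h𝒜)),
    fun _ => mem_fixedSubmodule_complProj_iff hp,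
    one_mem_fixedSubmodule, fun _ hx _ hy => mul_mem_fixedSubmodule hx hy,
    fun _ => comul_mem_range_map_subtype_fixedSubmodule hp, fun _ => antipode_mem_fixedSubmodule,
    one_mem_fixedSubmodule, fun _ hx _ hy => mul_mem_fixedSubmodule hx hy,
    fun _ => comul_mem_range_map_subtype_fixedSubmodule hP, fun _ => antipode_mem_fixedSubmodule,
    bijective_mul'_comp_map_subtype_fixedSubmodule hp⟩

/-- Let `A` be an `ℕ`-graded commutative and cocommutative Hopf
algebra over a commutative ring `k`.  Then the degree-zero part `A(0)` and the
connected component `A′ = {x | (id ⊗ p)(Δx) = x ⊗ 1}` of the unit are Hopf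
subalgebras (they contain `1` and are closed under multiplication, comultiplication
and antipode), and the multiplication map `A(0) ⊗_k A′ → A`, `a ⊗ x ↦ a·x`, is an
isomorphism (of Hopf algebras, where `A(0) ⊗_k A′` carries the tensor-product Hopf
structure); in particular it is a bijective `k`-linear map. -/
theorem stmt2 (k A : Type*) [CommRing k] [CommRing A] [HopfAlgebra k A]
    (hcocomm : ∀ x : A,
      TensorProduct.comm k A A (Coalgebra.comul (R := k) x) = Coalgebra.comul (R := k) x)
    (𝒜 : ℕ → Submodule k A) [DirectSum.Decomposition 𝒜]
    (hcomul : ∀ n : ℕ, ∀ x ∈ 𝒜 n, Coalgebra.comul (R := k) x ∈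
      ⨆ (ij : ℕ × ℕ) (_ : ij.1 + ij.2 = n),
        LinearMap.range (TensorProduct.map (𝒜 ij.1).subtype (𝒜 ij.2).subtype))
    (hcounit : ∀ n : ℕ, 0 < n → ∀ x ∈ 𝒜 n, Coalgebra.counit (R := k) x = 0)
    (hone : (1 : A) ∈ 𝒜 0)
    (hgrmul : ∀ i j : ℕ, ∀ x ∈ 𝒜 i, ∀ y ∈ 𝒜 j, x * y ∈ 𝒜 (i + j))
    (hgrS : ∀ n : ℕ, ∀ x ∈ 𝒜 n, HopfAlgebra.antipode (R := k) x ∈ 𝒜 n) :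
    -- `pr` is the projection of `A` onto the degree-zero component `A(0)`
    let pr : A →ₗ[k] A := (𝒜 0).subtype ∘ₗ
      (DirectSum.component k ℕ (fun i => ↥(𝒜 i)) 0) ∘ₗ
      (DirectSum.decomposeLinearEquiv 𝒜).toLinearMap
    ∃ A' : Submodule k A,
      -- `A'` is the connected component of the unit
      (∀ x : A, x ∈ A' ↔
        LinearMap.lTensor A pr (Coalgebra.comul (R := k) x) = x ⊗ₜ[k] (1 : A)) ∧
      -- `A(0)` is a Hopf subalgebra
      (1 : A) ∈ 𝒜 0 ∧
      (∀ x ∈ 𝒜 0, ∀ y ∈ 𝒜 0, x * y ∈ 𝒜 0) ∧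
      (∀ x ∈ 𝒜 0, Coalgebra.comul (R := k) x ∈
        LinearMap.range (TensorProduct.map (𝒜 0).subtype (𝒜 0).subtype)) ∧
      (∀ x ∈ 𝒜 0, HopfAlgebra.antipode (R := k) x ∈ 𝒜 0) ∧
      -- `A'` is a Hopf subalgebra
      (1 : A) ∈ A' ∧
      (∀ x ∈ A', ∀ y ∈ A', x * y ∈ A') ∧
      (∀ x ∈ A', Coalgebra.comul (R := k) x ∈
        LinearMap.range (TensorProduct.map A'.subtype A'.subtype)) ∧
      (∀ x ∈ A', HopfAlgebra.antipode (R := k) x ∈ A') ∧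
      -- the multiplication map `A(0) ⊗ A' → A` is an isomorphism
      Function.Bijective
        (LinearMap.mul' k A ∘ₗ TensorProduct.map (𝒜 0).subtype A'.subtype) :=
  stmt2_general k A hcocomm 𝒜 hcomul hcounit hone hgrmul
end

section
/- Let A be the 𝔽₂-vector space with basis {β_n}_{n ∈ ℕ}, made into a bialgebra over 𝔽₂ by the product β_i · β_j = (C(i+j, i) mod 2) · β_{i+j} with unit β₀, the comultiplication Δ(β_n) = Σ_{i+j=n} β_i ⊗ β_j, and the counit ε(β_n) = 1 if n = 0 and 0 otherwise. Then the 𝔽₂-linear map v : A → A defined on the basis by v(β_{2n}) = β_n and v(β_{2n+1}) = 0 is a surjective homomorphism of bialgebras: v(β₀) = β₀, v(x·y) = v(x)·v(y) for all x, y ∈ A, (v ⊗ v) ∘ Δ = Δ ∘ v, ε ∘ v = ε, and v is surjective. -/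
/-!
The Verschiebung halves even basis vectors and kills odd ones. On basis vectors,
multiplicativity is Lucas' theorem at `p = 2`: `C(2n, 2k) ≡ C(n, k)` and `C(2n, 2k+1) ≡ 0`
(the product `β_i β_j` with `i`, `j` not both even either has odd degree or vanishes). For the
coproduct, `v ⊗ v` kills every term of `Δ β_n` with an odd index, so nothing survives for `n` odd
and, for `n = 2k`, exactly the terms `β_{2a} ⊗ β_{2b}` with `a + b = k` survive, giving `Δ β_k`.
Surjectivity holds because `β_n = v β_{2n}`.
-/

open TensorProduct

open Finsupp

namespace CharTwo

variable {R : Type*} [AddMonoidWithOne R] [CharP R 2]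

theorem natCast_choose_two_mul_two_mul (n k : ℕ) :
    ((2 * n).choose (2 * k) : R) = n.choose k :=
  CharP.natCast_eq_natCast' R 2 Choose.choose_mul_mul_modEq_choose_nat

theorem natCast_choose_two_mul_two_mul_add_one (n k : ℕ) :
    ((2 * n).choose (2 * k + 1) : R) = 0 := by
  rw [CharP.natCast_eq_natCast' R 2 (Choose.choose_modEq_choose_mod_mul_choose_div_nat (p := 2))]
  simp [Nat.add_mod]

end CharTwo

theorem Finset.Nat.sum_antidiagonal_two_mul {M : Type*} [AddCommMonoid M] (f : ℕ × ℕ → M)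
    (hf : ∀ i j, f (2 * i + 1, j) = 0) (k : ℕ) :
    ∑ p ∈ antidiagonal (2 * k), f p = ∑ p ∈ antidiagonal k, f (2 * p.1, 2 * p.2) := by
  have hsub : (antidiagonal k).image (fun p => (2 * p.1, 2 * p.2)) ⊆ antidiagonal (2 * k) := by
    intro p hp
    obtain ⟨q, hq, rfl⟩ := Finset.mem_image.mp hp
    rw [HasAntidiagonal.mem_antidiagonal] at hq ⊢
    omega
  rw [← Finset.sum_subset hsub, Finset.sum_image]
  · intro p _ q _ h
    simp only [Prod.mk.injEq] at h
    ext <;> omega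
  rintro ⟨i, j⟩ hij hnot
  rw [HasAntidiagonal.mem_antidiagonal] at hij
  obtain ⟨a, rfl | rfl⟩ := i.even_or_odd'
  · refine absurd (Finset.mem_image.mpr ⟨(a, k - a), ?_, ?_⟩) hnot
    · rw [HasAntidiagonal.mem_antidiagonal]; omega
    · dsimp only at hij ⊢; rw [Prod.mk.injEq]; omega
  · exact hf a j

theorem Finset.Nat.sum_antidiagonal_two_mul_add_one {M : Type*} [AddCommMonoid M]
    (f : ℕ × ℕ → M) (hf : ∀ i j, f (2 * i + 1, j) = 0) (hf' : ∀ i j, f (i, 2 * j + 1) = 0)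
    (k : ℕ) : ∑ p ∈ antidiagonal (2 * k + 1), f p = 0 := by
  refine Finset.sum_eq_zero fun ⟨i, j⟩ hij => ?_
  rw [HasAntidiagonal.mem_antidiagonal] at hij
  obtain ⟨a, rfl | rfl⟩ := i.even_or_odd'
  · obtain rfl : j = 2 * (k - a) + 1 := by omega
    exact hf' _ _
  · exact hf a j

namespace Verschiebung

variable {R : Type*} [CommSemiring R] {v : (ℕ →₀ R) →ₗ[R] (ℕ →₀ R)}

theorem map_single_two_mul (hv_even : ∀ n, v (single (2 * n) 1) = single n 1) (n : ℕ) (c : R) :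
    v (single (2 * n) c) = single n c := by
  rw [← smul_single_one, map_smul, hv_even, smul_single_one]

theorem map_single_two_mul_add_one (hv_odd : ∀ n, v (single (2 * n + 1) 1) = 0) (n : ℕ) (c : R) :
    v (single (2 * n + 1) c) = 0 := by
  rw [← smul_single_one, map_smul, hv_odd, smul_zero]

theorem map_mul_single [CharP R 2] {m : (ℕ →₀ R) →ₗ[R] (ℕ →₀ R) →ₗ[R] (ℕ →₀ R)}
    (hm : ∀ i j, m (single i 1) (single j 1) = single (i + j) ((i + j).choose i : R))
    (hv_even : ∀ n, v (single (2 * n) 1) = single n 1)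
    (hv_odd : ∀ n, v (single (2 * n + 1) 1) = 0) (i j : ℕ) :
    v (m (single i 1) (single j 1)) = m (v (single i 1)) (v (single j 1)) := by
  rw [hm]
  obtain ⟨a, rfl | rfl⟩ := i.even_or_odd' <;> obtain ⟨b, rfl | rfl⟩ := j.even_or_odd'
  · rw [hv_even, hv_even, hm, ← mul_add, map_single_two_mul hv_even,
      CharTwo.natCast_choose_two_mul_two_mul]
  · rw [hv_odd, map_zero, show 2 * a + (2 * b + 1) = 2 * (a + b) + 1 by ring,
      map_single_two_mul_add_one hv_odd]
  · rw [hv_odd, map_zero, LinearMap.zero_apply,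
      show 2 * a + 1 + 2 * b = 2 * (a + b) + 1 by ring, map_single_two_mul_add_one hv_odd]
  · rw [hv_odd, map_zero, LinearMap.zero_apply,
      show 2 * a + 1 + (2 * b + 1) = 2 * (a + b + 1) by ring,
      CharTwo.natCast_choose_two_mul_two_mul_add_one, single_zero, map_zero]

theorem compr₂_eq_compl₁₂ [CharP R 2] {m : (ℕ →₀ R) →ₗ[R] (ℕ →₀ R) →ₗ[R] (ℕ →₀ R)}
    (hm : ∀ i j, m (single i 1) (single j 1) = single (i + j) ((i + j).choose i : R))
    (hv_even : ∀ n, v (single (2 * n) 1) = single n 1)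
    (hv_odd : ∀ n, v (single (2 * n + 1) 1) = 0) :
    m.compr₂ v = m.compl₁₂ v v :=
  LinearMap.ext_basis Finsupp.basisSingleOne Finsupp.basisSingleOne fun i j => by
    simpa using map_mul_single hm hv_even hv_odd i j

theorem map_map_comp_comul {Δ : (ℕ →₀ R) →ₗ[R] (ℕ →₀ R) ⊗[R] (ℕ →₀ R)}
    (hΔ : ∀ n, Δ (single n 1) = ∑ p ∈ Finset.HasAntidiagonal.antidiagonal n, single p.1 1 ⊗ₜ[R] single p.2 1)
    (hv_even : ∀ n, v (single (2 * n) 1) = single n 1)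
    (hv_odd : ∀ n, v (single (2 * n + 1) 1) = 0) :
    TensorProduct.map v v ∘ₗ Δ = Δ ∘ₗ v := by
  refine Finsupp.basisSingleOne.ext fun n => ?_
  simp only [coe_basisSingleOne, LinearMap.comp_apply, hΔ, map_sum, map_tmul]
  obtain ⟨k, rfl | rfl⟩ := n.even_or_odd'
  · rw [Finset.Nat.sum_antidiagonal_two_mul, hv_even, hΔ]
    · simp only [hv_even]
    · intro i j
      rw [hv_odd, zero_tmul]
  · rw [Finset.Nat.sum_antidiagonal_two_mul_add_one, hv_odd, map_zero]
    · intro i j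
      rw [hv_odd, zero_tmul]
    · intro i j
      rw [hv_odd, tmul_zero]

theorem counit_comp {ε : (ℕ →₀ R) →ₗ[R] R} (hε : ∀ n, ε (single n 1) = if n = 0 then 1 else 0)
    (hv_even : ∀ n, v (single (2 * n) 1) = single n 1)
    (hv_odd : ∀ n, v (single (2 * n + 1) 1) = 0) :
    ε ∘ₗ v = ε := by
  refine Finsupp.basisSingleOne.ext fun n => ?_
  obtain ⟨k, rfl | rfl⟩ := n.even_or_odd' <;>
    simp [hv_even, hv_odd, hε]

theorem comp_lmapDomain_two_mul (hv_even : ∀ n, v (single (2 * n) 1) = single n 1) :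
    v ∘ₗ lmapDomain R R (2 * ·) = LinearMap.id :=
  Finsupp.basisSingleOne.ext fun n => by simp [hv_even]

theorem surjective (hv_even : ∀ n, v (single (2 * n) 1) = single n 1) :
    Function.Surjective v :=
  fun x => ⟨lmapDomain R R (2 * ·) x, LinearMap.congr_fun (comp_lmapDomain_two_mul hv_even) x⟩

end Verschiebung

/-- On the mod-2 divided power bialgebra (basis `{β_n}`, product
`β_i · β_j = C(i+j,i) β_{i+j} mod 2`, coproduct `Δ(β_n) = Σ_{i+j=n} β_i ⊗ β_j`,
counit `ε(β_n) = δ_{n,0}`), the Verschiebung `v` determined by `v(β_{2n}) = β_n` and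
`v(β_{2n+1}) = 0` is a surjective homomorphism of bialgebras. -/
theorem stmt8 (β : ℕ → (ℕ →₀ ZMod 2)) (hβ : ∀ n, β n = Finsupp.single n 1)
    (m : (ℕ →₀ ZMod 2) →ₗ[ZMod 2] (ℕ →₀ ZMod 2) →ₗ[ZMod 2] (ℕ →₀ ZMod 2))
    (hm : ∀ i j, m (β i) (β j) = Finsupp.single (i + j) ((i + j).choose i : ZMod 2))
    (Δ : (ℕ →₀ ZMod 2) →ₗ[ZMod 2] (ℕ →₀ ZMod 2) ⊗[ZMod 2] (ℕ →₀ ZMod 2))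
    (hΔ : ∀ n, Δ (β n) = ∑ ij ∈ Finset.HasAntidiagonal.antidiagonal n, β ij.1 ⊗ₜ[ZMod 2] β ij.2)
    (ε : (ℕ →₀ ZMod 2) →ₗ[ZMod 2] ZMod 2)
    (hε : ∀ n, ε (β n) = if n = 0 then 1 else 0)
    (v : (ℕ →₀ ZMod 2) →ₗ[ZMod 2] (ℕ →₀ ZMod 2))
    (hv_even : ∀ n, v (β (2 * n)) = β n)
    (hv_odd : ∀ n, v (β (2 * n + 1)) = 0) :
    -- `v` preserves the unit and the product
    v (β 0) = β 0 ∧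
    (∀ x y, v (m x y) = m (v x) (v y)) ∧
    -- `v` is a coalgebra map
    (∀ x, TensorProduct.map v v (Δ x) = Δ (v x)) ∧
    (∀ x, ε (v x) = ε x) ∧
    -- `v` is surjective
    Function.Surjective v := by
  obtain rfl : β = fun n => single n 1 := funext hβ
  refine ⟨hv_even 0, fun x y => ?_, fun x => ?_, fun x => ?_, Verschiebung.surjective hv_even⟩
  · exact LinearMap.congr_fun₂ (Verschiebung.compr₂_eq_compl₁₂ hm hv_even hv_odd) x y
  · exact LinearMap.congr_fun (Verschiebung.map_map_comp_comul hΔ hv_even hv_odd) x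
  · exact LinearMap.congr_fun (Verschiebung.counit_comp hε hv_even hv_odd) x
end

section
/- Let 𝒞 be an additive category admitting countable coproducts and let F : Ab → 𝒞 be an additive functor from the category of abelian groups that preserves countable coproducts. Let A₀ → A₁ → A₂ → ⋯ be a sequence of abelian groups and homomorphisms whose colimit A = colim Aₙ is a free abelian group. Then the sequence F(A₀) → F(A₁) → ⋯ has a colimit in 𝒞, and the maps F(Aₙ) → F(A) obtained by applying F to the canonical maps Aₙ → A exhibit F(A) as that colimit. -/
/-!
The colimit of `A₀ → A₁ → ⋯` is the cokernel of `d = 1 - shift` on `∐ Aₙ`, and conversely a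
cokernel of `d` is a colimit of the sequence. For abelian groups `d` is injective on `⨁ Aₙ`, so
`0 → ⨁ Aₙ → ⨁ Aₙ → A → 0` is short exact, and it splits because `A` is free. Any additive
functor keeps the splitting, and the second map of a split short complex is a cokernel of the
first; as `F` also preserves `⨁ Aₙ = ∐ Aₙ`, this exhibits `F A` as the colimit of the `F Aₙ`.
-/

open CategoryTheory CategoryTheory.Limits

namespace DirectSum

variable {β : ℕ → Type*} [∀ n, AddCommGroup (β n)] (f : ∀ n, β n →+ β (n + 1))

def shift : (⨁ n, β n) →+ ⨁ n, β n :=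
  toAddMonoid fun n => (of β (n + 1)).comp (f n)

lemma shift_of (n : ℕ) (a : β n) : shift f (of β n a) = of β (n + 1) (f n a) :=
  toAddMonoid_of _ n a

lemma shift_apply_zero (x : ⨁ n, β n) : shift f x 0 = 0 := by
  induction x using DirectSum.induction_on with
  | zero => simp
  | of n a => rw [shift_of, of_eq_of_ne _ _ _ n.succ_ne_zero.symm]
  | add x y hx hy => rw [map_add, add_apply, hx, hy, add_zero]

lemma shift_apply_succ (x : ⨁ n, β n) (m : ℕ) : shift f x (m + 1) = f m (x m) := by
  induction x using DirectSum.induction_on with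
  | zero => simp
  | of n a =>
    rw [shift_of]
    obtain rfl | h := eq_or_ne n m
    · rw [of_eq_same, of_eq_same]
    · rw [of_eq_of_ne _ _ _ (by omega), of_eq_of_ne _ _ _ h.symm, map_zero]
  | add x y hx hy => rw [map_add, add_apply, hx, hy, add_apply, map_add]

lemma eq_zero_of_shift_eq_self {x : ⨁ n, β n} (hx : shift f x = x) : x = 0 := by
  have h : ∀ m, x m = 0 := by
    intro m
    induction m with
    | zero => rw [← hx, shift_apply_zero]
    | succ m ih => rw [← hx, shift_apply_succ, ih, map_zero]
  exact DFinsupp.ext fun m => (h m).trans (zero_apply (β := β) m).symm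

lemma injective_sub_shift : Function.Injective fun x : ⨁ n, β n => x - shift f x := by
  refine (injective_iff_map_eq_zero (AddMonoidHom.id _ - shift f)).2 fun x hx => ?_
  exact eq_zero_of_shift_eq_self f (sub_eq_zero.1 hx).symm

end DirectSum

namespace CategoryTheory.ShortComplex.Splitting

variable {C : Type*} [Category C] [Preadditive C] {S : ShortComplex C}

def isColimitCokernelCofork (s : S.Splitting) : IsColimit (CokernelCofork.ofπ S.g S.zero) :=
  CokernelCofork.IsColimit.ofπ _ _ (fun k _ => s.s ≫ k)
    (fun k hk => by
      rw [← Category.assoc, s.g_s, Preadditive.sub_comp, Category.id_comp, Category.assoc, hk,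
        comp_zero, sub_zero])
    (fun k _ m hm => by rw [← hm, ← Category.assoc, s.s_g, Category.id_comp])

end CategoryTheory.ShortComplex.Splitting

namespace CategoryTheory.Limits

structure Telescope {C : Type*} [Category C] [Preadditive C] {A : ℕ ⥤ C} (c : Cocone A) where
  cofan : Cofan fun n => A.obj n
  isColimit : IsColimit cofan
  d : cofan.pt ⟶ cofan.pt
  π : cofan.pt ⟶ c.pt
  inj_d (n : ℕ) :
    cofan.inj n ≫ d = cofan.inj n - A.map (homOfLE n.le_succ) ≫ cofan.inj (n + 1)
  inj_π (n : ℕ) : cofan.inj n ≫ π = c.ι.app n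

namespace Telescope

variable {C : Type*} [Category C] [Preadditive C] {A : ℕ ⥤ C} {c : Cocone A} (T : Telescope c)

lemma inj_comp_eq_of_d_comp_eq_zero {X : C} {k : T.cofan.pt ⟶ X} (hk : T.d ≫ k = 0) (n : ℕ) :
    A.map (homOfLE n.le_succ) ≫ T.cofan.inj (n + 1) ≫ k = T.cofan.inj n ≫ k := by
  have h := T.cofan.inj n ≫= hk
  rw [reassoc_of% T.inj_d n, comp_zero, Preadditive.sub_comp, sub_eq_zero, Category.assoc] at h
  exact h.symm

lemma d_comp_eq_zero (s : Cocone A) {k : T.cofan.pt ⟶ s.pt}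
    (hk : ∀ n, T.cofan.inj n ≫ k = s.ι.app n) : T.d ≫ k = 0 :=
  Cofan.IsColimit.hom_ext T.isColimit _ _ fun n => by
    rw [reassoc_of% T.inj_d n, comp_zero, Preadditive.sub_comp, Category.assoc, hk, hk, s.w,
      sub_self]

lemma d_comp_π : T.d ≫ T.π = 0 :=
  T.d_comp_eq_zero c T.inj_π

def shortComplex : ShortComplex C :=
  ShortComplex.mk T.d T.π T.d_comp_π

def coconeOfDCompEqZero {X : C} (k : T.cofan.pt ⟶ X) (hk : T.d ≫ k = 0) : Cocone A where
  pt := X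
  ι := NatTrans.ofSequence (fun n => T.cofan.inj n ≫ k) fun n => by
    simpa using T.inj_comp_eq_of_d_comp_eq_zero hk n

def isColimitCokernelCofork (hc : IsColimit c) :
    IsColimit (CokernelCofork.ofπ T.π T.d_comp_π) :=
  CokernelCofork.IsColimit.ofπ _ _ (fun k hk => hc.desc (T.coconeOfDCompEqZero k hk))
    (fun k hk => Cofan.IsColimit.hom_ext T.isColimit _ _ fun n =>
      (reassoc_of% T.inj_π n) _ |>.trans (hc.fac (T.coconeOfDCompEqZero k hk) n))
    (fun k hk m hm => hc.hom_ext fun n =>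
      (by rw [← hm, reassoc_of% T.inj_π n] : c.ι.app n ≫ m = T.cofan.inj n ≫ k).trans
        (hc.fac (T.coconeOfDCompEqZero k hk) n).symm)

def isColimitOfIsColimitCokernelCofork (h : IsColimit (CokernelCofork.ofπ T.π T.d_comp_π)) :
    IsColimit c :=
  let desc (s : Cocone A) := CokernelCofork.IsColimit.desc' h
    (Cofan.IsColimit.desc T.isColimit s.ι.app) (T.d_comp_eq_zero s (Cofan.IsColimit.fac _ _))
  { desc s := (desc s).1
    fac s n := by
      rw [← T.inj_π n, Category.assoc, show T.π ≫ (desc s).1 = _ from (desc s).2,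
        Cofan.IsColimit.fac]
    uniq s m hm := Cofork.IsColimit.hom_ext h <|
      Cofan.IsColimit.hom_ext T.isColimit _ _ fun n => by
        rw [(desc s).2, Cofan.IsColimit.fac, CokernelCofork.π_ofπ, reassoc_of% T.inj_π n, hm] }

def isColimitOfSplitting (s : T.shortComplex.Splitting) : IsColimit c :=
  T.isColimitOfIsColimitCokernelCofork s.isColimitCokernelCofork

variable {D : Type*} [Category D] [Preadditive D] (F : C ⥤ D) [F.Additive]
  [PreservesColimit (Discrete.functor fun n => A.obj n) F]

noncomputable def map : Telescope (F.mapCocone c) where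
  cofan := Cofan.mk (F.obj T.cofan.pt) fun n => F.map (T.cofan.inj n)
  isColimit := isColimitCofanMkObjOfIsColimit F _ _ T.isColimit
  d := F.map T.d
  π := F.map T.π
  inj_d n := (F.map_comp _ _).symm.trans (by rw [T.inj_d, F.map_sub, F.map_comp]; rfl)
  inj_π n := (F.map_comp _ _).symm.trans (by rw [T.inj_π]; rfl)

noncomputable def isColimitMapCoconeOfSplitting (s : T.shortComplex.Splitting) :
    IsColimit (F.mapCocone c) :=
  (T.map F).isColimitOfSplitting (s.map F)

end Telescope

end CategoryTheory.Limits

namespace AddCommGrpCat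

open DirectSum

universe u v

def directSumCofan {ι : Type v} [DecidableEq ι] (X : ι → AddCommGrpCat.{max v u}) : Cofan X :=
  Cofan.mk (of (⨁ i, X i)) fun i => ofHom (DirectSum.of (fun i => X i) i)

def isColimitDirectSumCofan {ι : Type v} [DecidableEq ι] (X : ι → AddCommGrpCat.{max v u}) :
    IsColimit (directSumCofan X) :=
  Cofan.IsColimit.mk _ (fun s => ofHom (toAddMonoid fun i => (s.inj i).hom))
    (fun s i => by ext x; simp [directSumCofan])
    (fun s m hm => hom_ext <| addHom_ext' fun i => AddMonoidHom.ext fun x =>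
      (ConcreteCategory.congr_hom (hm i) x).trans
        (toAddMonoid_of (β := fun i => X i) (fun i => (s.inj i).hom) i x).symm)

lemma projective_of_free (X : AddCommGrpCat.{u}) [Module.Free ℤ X] : Projective X where
  factors f e _ := by
    obtain ⟨g, hg⟩ := Module.projective_lifting_property e.hom.toIntLinearMap
      f.hom.toIntLinearMap ((epi_iff_surjective e).1 ‹_›)
    exact ⟨ofHom g.toAddMonoidHom, by ext x; exact LinearMap.congr_fun hg x⟩

variable {A : ℕ ⥤ AddCommGrpCat.{u}}

noncomputable def telescope (c : Cocone A) : Telescope c where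
  cofan := directSumCofan fun n => A.obj n
  isColimit := isColimitDirectSumCofan _
  d := 𝟙 _ - ofHom (shift fun n => (A.map (homOfLE n.le_succ)).hom)
  π := Cofan.IsColimit.desc (isColimitDirectSumCofan _) c.ι.app
  inj_d n := AddCommGrpCat.ext fun x => by
    change DirectSum.of (fun i => A.obj i) n x - shift _ (DirectSum.of (fun i => A.obj i) n x) = _
    rw [shift_of]
    rfl
  inj_π := Cofan.IsColimit.fac _ _

lemma shortExact_telescope {c : Cocone A} (hc : IsColimit c) :
    (telescope c).shortComplex.ShortExact :=
  have hcok := (telescope c).isColimitCokernelCofork hc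
  { exact := ShortComplex.exact_of_g_is_cokernel _ hcok
    mono_f := (mono_iff_injective _).2 (injective_sub_shift _)
    epi_g := epi_of_isColimit_cofork hcok }

end AddCommGrpCat

theorem stmt11_general {C : Type*} [Category C] [Preadditive C]
    (F : AddCommGrpCat.{0} ⥤ C) [F.Additive]
    (hF : ∀ (J : Type) [Countable J], PreservesColimitsOfShape (Discrete J) F)
    (A : ℕ ⥤ AddCommGrpCat.{0}) (c : Cocone A) (hc : IsColimit c)
    (hfree : Module.Free ℤ c.pt) :
    Nonempty (IsColimit (F.mapCocone c)) := by
  have := hF ℕ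
  have : Projective (AddCommGrpCat.telescope c).shortComplex.X₃ :=
    AddCommGrpCat.projective_of_free c.pt
  exact ⟨(AddCommGrpCat.telescope c).isColimitMapCoconeOfSplitting F
    (AddCommGrpCat.shortExact_telescope hc).splittingOfProjective⟩

/-- Let `𝒞` be an additive category with countable coproducts and
`F : Ab ⥤ 𝒞` an additive functor preserving countable coproducts.  If a sequence
`A₀ → A₁ → ⋯` of abelian groups has a colimit which is a free abelian group, then
applying `F` to a colimit cocone again yields a colimit cocone (in particular the
sequence `F(A₀) → F(A₁) → ⋯` has a colimit, namely `F(colim Aₙ)`). -/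
theorem stmt11 {C : Type*} [Category C] [Preadditive C] [HasFiniteBiproducts C]
    (hcoprod : ∀ (J : Type) [Countable J], HasColimitsOfShape (Discrete J) C)
    (F : AddCommGrpCat.{0} ⥤ C) [F.Additive]
    (hF : ∀ (J : Type) [Countable J], PreservesColimitsOfShape (Discrete J) F)
    (A : ℕ ⥤ AddCommGrpCat.{0}) (c : Cocone A) (hc : IsColimit c)
    (hfree : Module.Free ℤ c.pt) :
    Nonempty (IsColimit (F.mapCocone c)) :=
  stmt11_general F hF A c hc hfree
end
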